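/- Let d ≥ 2 be an integer, set α := (d−1)/2, and let Q be a finite set of unit vectors in ℝ^{d+1} such that no two distinct elements p, q ∈ Q satisfy p = q or p = −q. For ℓ ∈ ℕ let A_ℓ be the Q×Q matrix with entries A_ℓ(p,q) := C_ℓ^{(α)}(⟨p,q⟩)/C_ℓ^{(α)}(1). Then A_ℓ is real and symmetric with diagonal entries equal to 1, there exists C > 0 such that for all ℓ ≥ 1 and every p ∈ Q one has Σ_{q ∈ Q, q ≠ p} |A_ℓ(p,q)| ≤ C ℓ^{−(d−1)/2}, and consequently for all sufficiently large ℓ the matrix A_ℓ is strictly diagonally dominant and hence invertible. -/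

import Mathlib

/-
Write `d = e + 2`, so that `α = (e + 1) / 2`. Then the Gegenbauer polynomials have Laplace's
integral representation `C_n(s) / C_n(1) = ∫₀^π uⁿ sinᵉ φ dφ / ∫₀^π sinᵉ φ dφ` with
`u = s + i √(1 - s²) cos φ`: both sides satisfy the same three-term recurrence, which for the integrals comes from
integrating the derivative of `i √(1 - s²) uⁿ⁺¹ sinᵉ⁺¹ φ`, a function vanishing at `0` and `π`.
Since `|u|² = 1 - (1 - s²) sin² φ ≤ exp (-(1 - s²) sin² φ)`, for `|s| ≤ r < 1` the integrand is
bounded by `exp (-n (1 - r²) sin² φ / 2) sinᵉ φ`. This is symmetric about `π/2`, and on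
`[0, π/2]` Jordan's inequality bounds it by `φᵉ exp (-(2 n (1 - r²) / π²) φ²)`, a Gaussian moment
whose integral over `(0, ∞)` is `O(n^{-(e+1)/2})`.
Distinct non-antipodal unit vectors have `|⟨p, q⟩|` bounded by some `r < 1`, so the off-diagonal
entries of `A_ℓ` are `O(ℓ^{-(d-1)/2})`; once the row sums drop below the unit diagonal,
Gershgorin's theorem makes `A_ℓ` invertible.
-/

open scoped Classical RealInnerProductSpace

/-- The Gegenbauer (ultraspherical) polynomial `C_ℓ^{(α)}`, as a function of `s`, defined
through Bonnet's recursion `(ℓ+1)C_{ℓ+1}(s) = 2(ℓ+α)s C_ℓ(s) − (ℓ+2α−1)C_{ℓ−1}(s)`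
with `C₀ = 1`, `C₁(s) = 2αs`; this is the coefficient sequence of the generating
function `(1 − 2sx + x²)^{−α} = Σ_ℓ C_ℓ^{(α)}(s) x^ℓ`. -/
noncomputable def gegenbauer (α : ℝ) : ℕ → ℝ → ℝ
  | 0 => fun _ => 1
  | 1 => fun s => 2 * α * s
  | (n + 2) => fun s =>
      (2 * ((n : ℝ) + 1 + α) * s * gegenbauer α (n + 1) s
        - ((n : ℝ) + 2 * α) * gegenbauer α n s) / ((n : ℝ) + 2)

/-- The `Q × Q` matrix `A_ℓ(p,q) = C_ℓ^{((d−1)/2)}(⟨p,q⟩)/C_ℓ^{((d−1)/2)}(1)` of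
normalized Gegenbauer values on a finite set `Q` of unit vectors of `ℝ^{d+1}`. -/
noncomputable def gegenMatrix (d : ℕ) (Q : Finset (EuclideanSpace ℝ (Fin (d + 1))))
    (ℓ : ℕ) : Matrix Q Q ℝ :=
  fun p q => gegenbauer (((d : ℝ) - 1) / 2) ℓ
      ⟪(p : EuclideanSpace ℝ (Fin (d + 1))), (q : EuclideanSpace ℝ (Fin (d + 1)))⟫
    / gegenbauer (((d : ℝ) - 1) / 2) ℓ 1

open Real MeasureTheory Set Topology

theorem gegenbauer_succ_one (α : ℝ) (n : ℕ) :
    (n + 1) * gegenbauer α (n + 1) 1 = (n + 2 * α) * gegenbauer α n 1 := by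
  induction n with
  | zero => simp [gegenbauer]
  | succ n ih =>
    simp only [gegenbauer]
    push_cast
    field_simp
    linear_combination (↑n + 2) * ih

theorem gegenbauer_one_pos {α : ℝ} (hα : 0 < α) (n : ℕ) : 0 < gegenbauer α n 1 := by
  induction n with
  | zero => simp [gegenbauer]
  | succ n ih =>
    have h : 0 < (n + 1) * gegenbauer α (n + 1) 1 := by
      rw [gegenbauer_succ_one]; positivity
    exact pos_of_mul_pos_right h (by positivity)

noncomputable def laplaceBase (s φ : ℝ) : ℂ := s + ((√(1 - s ^ 2) * cos φ : ℝ) : ℂ) * Complex.I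

noncomputable def laplaceIntegral (e : ℕ) (s : ℝ) (n : ℕ) : ℂ :=
  ∫ φ in (0 : ℝ)..π, laplaceBase s φ ^ n * ((sin φ ^ e : ℝ) : ℂ)

section Laplace

variable (e : ℕ) (s : ℝ)

@[fun_prop]
theorem continuous_laplaceBase : Continuous (laplaceBase s) := by
  unfold laplaceBase; fun_prop

theorem intervalIntegrable_laplaceBase_pow_mul (n : ℕ) (a b : ℝ) :
    IntervalIntegrable (fun φ => laplaceBase s φ ^ n * ((sin φ ^ e : ℝ) : ℂ)) volume a b :=
  (((continuous_laplaceBase s).pow n).mul (by fun_prop)).intervalIntegrable a b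

theorem hasDerivAt_laplaceBase (φ : ℝ) :
    HasDerivAt (laplaceBase s) (((-(√(1 - s ^ 2) * sin φ) : ℝ) : ℂ) * Complex.I) φ := by
  have h := (((hasDerivAt_cos φ).const_mul √(1 - s ^ 2)).ofReal_comp.mul_const Complex.I).const_add
    (s : ℂ)
  exact h.congr_deriv (by push_cast; ring)

theorem hasDerivAt_ofReal_sin_pow_succ (φ : ℝ) :
    HasDerivAt (fun φ => ((sin φ ^ (e + 1) : ℝ) : ℂ))
      (((e + 1) * sin φ ^ e * cos φ : ℝ) : ℂ) φ :=
  ((hasDerivAt_sin φ).pow (e + 1)).ofReal_comp.congr_deriv (by simp)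

theorem integral_eq_zero_of_hasDerivAt_mul_sin_pow {g f : ℝ → ℂ}
    (hderiv : ∀ φ, HasDerivAt (fun φ => g φ * ((sin φ ^ (e + 1) : ℝ) : ℂ)) (f φ) φ)
    (hf : Continuous f) : ∫ φ in (0 : ℝ)..π, f φ = 0 := by
  rw [intervalIntegral.integral_eq_sub_of_hasDerivAt (fun φ _ => hderiv φ)
    (hf.intervalIntegrable _ _)]
  simp

theorem laplaceBase_sub_ofReal (φ : ℝ) :
    laplaceBase s φ - s = ((√(1 - s ^ 2) : ℝ) : ℂ) * Complex.I * ((cos φ : ℝ) : ℂ) := by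
  unfold laplaceBase; push_cast; ring

theorem hasDerivAt_laplaceIntegral_add_two_primitive (hs : s ^ 2 ≤ 1) (n : ℕ) (φ : ℝ) :
    HasDerivAt
      (fun φ => ((√(1 - s ^ 2) : ℝ) : ℂ) * Complex.I * laplaceBase s φ ^ (n + 1) *
        ((sin φ ^ (e + 1) : ℝ) : ℂ))
      (((n + 1) * laplaceBase s φ ^ n - (2 * n + e + 3) * s * laplaceBase s φ ^ (n + 1)
        + (n + e + 2) * laplaceBase s φ ^ (n + 2)) * ((sin φ ^ e : ℝ) : ℂ)) φ := by
  refine ((((hasDerivAt_laplaceBase s φ).pow (n + 1)).const_mul _).mul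
    (hasDerivAt_ofReal_sin_pow_succ e φ)).congr_deriv ?_
  have hc : ((√(1 - s ^ 2) : ℝ) : ℂ) ^ 2 = 1 - (s : ℂ) ^ 2 := by
    exact_mod_cast Real.sq_sqrt (by linarith)
  have hsc : ((sin φ : ℝ) : ℂ) ^ 2 + ((cos φ : ℝ) : ℂ) ^ 2 = 1 := by
    exact_mod_cast sin_sq_add_cos_sq φ
  have hu := laplaceBase_sub_ofReal s φ
  simp only [Pi.pow_apply, Nat.add_sub_cancel, Complex.ofReal_mul, Complex.ofReal_pow,
    Complex.ofReal_neg, Complex.ofReal_add, Complex.ofReal_natCast, Complex.ofReal_one,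
    Nat.cast_succ]
  set u := laplaceBase s φ
  set c := ((√(1 - s ^ 2) : ℝ) : ℂ)
  set S := ((sin φ : ℝ) : ℂ)
  set C := ((cos φ : ℝ) : ℂ)
  linear_combination
    -(n + 1) * u ^ n * S ^ e * c ^ 2 * (S ^ 2 + C ^ 2) * Complex.I_sq
    + (n + 1) * u ^ n * c ^ 2 * S ^ e * hsc + (n + 1) * u ^ n * S ^ e * hc
    - ((n + 1) * u ^ n * S ^ e * (c * Complex.I * C + u - s)
      + (e + 1) * u ^ (n + 1) * S ^ e) * hu

theorem hasDerivAt_laplaceIntegral_one_primitive (φ : ℝ) :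
    HasDerivAt (fun φ => ((√(1 - s ^ 2) : ℝ) : ℂ) * Complex.I * ((sin φ ^ (e + 1) : ℝ) : ℂ))
      ((e + 1) * (laplaceBase s φ - s) * ((sin φ ^ e : ℝ) : ℂ)) φ := by
  refine ((hasDerivAt_ofReal_sin_pow_succ e φ).const_mul _).congr_deriv ?_
  rw [laplaceBase_sub_ofReal]
  push_cast
  ring

theorem integral_combination_eq_laplaceIntegral (a b c : ℂ) (n : ℕ) :
    ∫ φ in (0 : ℝ)..π, (a * laplaceBase s φ ^ n + b * laplaceBase s φ ^ (n + 1)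
        + c * laplaceBase s φ ^ (n + 2)) * ((sin φ ^ e : ℝ) : ℂ)
      = a * laplaceIntegral e s n + b * laplaceIntegral e s (n + 1)
        + c * laplaceIntegral e s (n + 2) := by
  have hint := intervalIntegrable_laplaceBase_pow_mul e s
  simp only [add_mul, mul_assoc]
  rw [intervalIntegral.integral_add (((hint _ _ _).const_mul _).add ((hint _ _ _).const_mul _))
      ((hint _ _ _).const_mul _),
    intervalIntegral.integral_add ((hint _ _ _).const_mul _) ((hint _ _ _).const_mul _),
    intervalIntegral.integral_const_mul, intervalIntegral.integral_const_mul,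
    intervalIntegral.integral_const_mul]
  rfl

theorem laplaceIntegral_one : laplaceIntegral e s 1 = s * laplaceIntegral e s 0 := by
  have h := integral_eq_zero_of_hasDerivAt_mul_sin_pow e
    (hasDerivAt_laplaceIntegral_one_primitive e s) (by fun_prop)
  rw [intervalIntegral.integral_congr (g := fun φ => (-((e + 1) * s) * laplaceBase s φ ^ 0
      + (e + 1) * laplaceBase s φ ^ (0 + 1) + 0 * laplaceBase s φ ^ (0 + 2)) *
        ((sin φ ^ e : ℝ) : ℂ)) (fun φ _ => by ring),
    integral_combination_eq_laplaceIntegral] at h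
  have he : (e + 1 : ℂ) ≠ 0 := by exact_mod_cast e.succ_ne_zero
  exact mul_left_cancel₀ he (by linear_combination h)

theorem laplaceIntegral_add_two (hs : s ^ 2 ≤ 1) (n : ℕ) :
    (n + e + 2) * laplaceIntegral e s (n + 2)
      = (2 * n + e + 3) * s * laplaceIntegral e s (n + 1) - (n + 1) * laplaceIntegral e s n := by
  have h := integral_eq_zero_of_hasDerivAt_mul_sin_pow e
    (hasDerivAt_laplaceIntegral_add_two_primitive e s hs n) (by fun_prop)
  rw [intervalIntegral.integral_congr (g := fun φ => ((n + 1) * laplaceBase s φ ^ n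
      + (-((2 * n + e + 3) * s)) * laplaceBase s φ ^ (n + 1)
      + (n + e + 2) * laplaceBase s φ ^ (n + 2)) * ((sin φ ^ e : ℝ) : ℂ)) (fun φ _ => by ring),
    integral_combination_eq_laplaceIntegral] at h
  linear_combination h

theorem laplaceIntegral_zero :
    laplaceIntegral e s 0 = ((∫ φ in (0 : ℝ)..π, sin φ ^ e : ℝ) : ℂ) := by
  simp only [laplaceIntegral, pow_zero, one_mul]
  exact intervalIntegral.integral_ofReal

end Laplace

theorem gegenbauer_mul_laplaceIntegral_zero (e : ℕ) {s : ℝ} (hs : s ^ 2 ≤ 1) (n : ℕ) :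
    (gegenbauer ((e + 1) / 2) n s : ℂ) * laplaceIntegral e s 0
      = gegenbauer ((e + 1) / 2) n 1 * laplaceIntegral e s n := by
  induction n using Nat.twoStepInduction with
  | zero => simp [gegenbauer]
  | one => simp only [gegenbauer, laplaceIntegral_one]; push_cast; ring
  | more n ih0 ih1 =>
    have hsucc : ((n : ℂ) + 1) * gegenbauer ((e + 1) / 2) (n + 1) 1
        = ((n : ℂ) + e + 1) * gegenbauer ((e + 1) / 2) n 1 := by
      have h := gegenbauer_succ_one ((e + 1) / 2) n
      rw [show (n : ℝ) + 2 * ((e + 1) / 2) = n + e + 1 by ring] at h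
      exact_mod_cast h
    have hrec := laplaceIntegral_add_two e s hs n
    have hn : (n + 2 : ℂ) ≠ 0 := by exact_mod_cast (by omega : n + 2 ≠ 0)
    simp only [gegenbauer]
    push_cast
    rw [div_mul_eq_mul_div, div_mul_eq_mul_div, div_left_inj' hn]
    linear_combination ((2 * n + e + 3) * s) * ih1 - (n + e + 1) * ih0
      + (laplaceIntegral e s n - laplaceIntegral e s (n + 2)) * hsucc
      - (gegenbauer ((e + 1) / 2) (n + 1) 1 : ℂ) * hrec

theorem intervalIntegral_eq_two_mul_of_symm {f : ℝ → ℝ} {a : ℝ} (hf : Continuous f)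
    (hsymm : ∀ x, f (a - x) = f x) :
    ∫ x in (0 : ℝ)..a, f x = 2 * ∫ x in (0 : ℝ)..(a / 2), f x := by
  have h := intervalIntegral.integral_comp_sub_left f a (a := a / 2) (b := a)
  simp only [hsymm, sub_self, sub_half] at h
  rw [← intervalIntegral.integral_add_adjacent_intervals (hf.intervalIntegrable 0 (a / 2))
    (hf.intervalIntegrable _ a), h]
  ring

theorem exp_neg_mul_sin_sq_mul_sin_pow_le (e : ℕ) {a φ : ℝ} (ha : 0 ≤ a) (h0 : 0 ≤ φ)
    (hπ : φ ≤ π / 2) :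
    exp (-(a * sin φ ^ 2)) * sin φ ^ e ≤ φ ^ (e : ℝ) * exp (-(4 * a / π ^ 2) * φ ^ 2) := by
  have hsin0 : 0 ≤ sin φ := sin_nonneg_of_nonneg_of_le_pi h0 (by linarith [pi_pos])
  have hexp : exp (-(a * sin φ ^ 2)) ≤ exp (-(4 * a / π ^ 2) * φ ^ 2) := by
    rw [exp_le_exp, neg_mul, neg_le_neg_iff]
    calc 4 * a / π ^ 2 * φ ^ 2 = a * (2 / π * φ) ^ 2 := by ring
      _ ≤ a * sin φ ^ 2 := by gcongr; exact mul_le_sin h0 hπ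
  rw [rpow_natCast, mul_comm (φ ^ e)]
  exact mul_le_mul hexp (pow_le_pow_left₀ hsin0 (sin_le h0) e) (pow_nonneg hsin0 e)
    (exp_pos _).le

theorem integral_exp_neg_mul_sin_sq_mul_sin_pow_le (e : ℕ) {a : ℝ} (ha : 0 < a) :
    ∫ φ in (0 : ℝ)..π, exp (-(a * sin φ ^ 2)) * sin φ ^ e
      ≤ (4 * a / π ^ 2) ^ (-((e : ℝ) + 1) / 2) * Gamma (((e : ℝ) + 1) / 2) := by
  set b := 4 * a / π ^ 2
  have hb : 0 < b := by positivity
  have he : (-1 : ℝ) < e := by linarith [e.cast_nonneg (α := ℝ)]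
  have hg := integrableOn_rpow_mul_exp_neg_mul_sq hb he
  rw [intervalIntegral_eq_two_mul_of_symm (by fun_prop) fun φ => by rw [sin_pi_sub],
    intervalIntegral.integral_of_le (by positivity)]
  calc 2 * ∫ φ in Ioc 0 (π / 2), exp (-(a * sin φ ^ 2)) * sin φ ^ e
      ≤ 2 * ∫ φ in Ioc 0 (π / 2), φ ^ (e : ℝ) * exp (-b * φ ^ 2) := by
        gcongr 2 * ?_
        exact setIntegral_mono_on ((by fun_prop : Continuous fun φ =>
            exp (-(a * sin φ ^ 2)) * sin φ ^ e).integrableOn_Icc.mono_set Ioc_subset_Icc_self)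
          (hg.mono_set Ioc_subset_Ioi_self) measurableSet_Ioc
          fun φ hφ => exp_neg_mul_sin_sq_mul_sin_pow_le e ha.le hφ.1.le hφ.2
    _ ≤ 2 * ∫ x in Ioi 0, x ^ (e : ℝ) * exp (-b * x ^ 2) := by
        gcongr 2 * ?_
        exact setIntegral_mono_set hg ((ae_restrict_mem measurableSet_Ioi).mono fun x hx =>
          mul_nonneg (rpow_nonneg (le_of_lt hx) _) (exp_pos _).le) Ioc_subset_Ioi_self.eventuallyLE
    _ = 2 * (b ^ (-((e : ℝ) + 1) / 2) * (1 / 2) * Gamma (((e : ℝ) + 1) / 2)) := by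
        rw [← integral_rpow_mul_exp_neg_mul_rpow two_pos he hb]
        simp only [rpow_two]
    _ = _ := by ring

theorem norm_laplaceBase_sq {s : ℝ} (hs : s ^ 2 ≤ 1) (φ : ℝ) :
    ‖laplaceBase s φ‖ ^ 2 = 1 - (1 - s ^ 2) * sin φ ^ 2 := by
  rw [laplaceBase, Complex.norm_add_mul_I, sq_sqrt (by positivity), mul_pow,
    sq_sqrt (by linarith)]
  linear_combination (1 - s ^ 2) * cos_sq_add_sin_sq φ

theorem norm_laplaceBase_le_exp {s : ℝ} (hs : s ^ 2 ≤ 1) (φ : ℝ) :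
    ‖laplaceBase s φ‖ ≤ exp (-((1 - s ^ 2) / 2 * sin φ ^ 2)) := by
  refine (pow_le_pow_iff_left₀ (norm_nonneg _) (exp_pos _).le two_ne_zero).mp ?_
  calc ‖laplaceBase s φ‖ ^ 2 = 1 - (1 - s ^ 2) * sin φ ^ 2 := norm_laplaceBase_sq hs φ
    _ ≤ exp (-((1 - s ^ 2) * sin φ ^ 2)) := by
        linarith [add_one_le_exp (-((1 - s ^ 2) * sin φ ^ 2))]
    _ = exp (-((1 - s ^ 2) / 2 * sin φ ^ 2)) ^ 2 := by rw [← exp_nat_mul]; ring_nf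

theorem norm_laplaceIntegral_le (e : ℕ) {r s : ℝ} (hr : r < 1) (hs : |s| ≤ r) (n : ℕ) :
    ‖laplaceIntegral e s n‖
      ≤ ∫ φ in (0 : ℝ)..π, exp (-(n * ((1 - r ^ 2) / 2) * sin φ ^ 2)) * sin φ ^ e := by
  have hsr : s ^ 2 ≤ r ^ 2 := sq_le_sq' (abs_le.mp hs).1 (abs_le.mp hs).2
  have hs1 : s ^ 2 ≤ 1 := by nlinarith [abs_nonneg s]
  refine (intervalIntegral.norm_integral_le_integral_norm pi_pos.le).trans
    (intervalIntegral.integral_mono_on pi_pos.le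
      ((by fun_prop : Continuous fun φ => ‖laplaceBase s φ ^ n * ((sin φ ^ e : ℝ) : ℂ)‖)
        |>.intervalIntegrable _ _)
      ((by fun_prop : Continuous _).intervalIntegrable _ _) fun φ hφ => ?_)
  have hsin : 0 ≤ sin φ := sin_nonneg_of_nonneg_of_le_pi hφ.1 hφ.2
  rw [norm_mul, norm_pow, Complex.norm_real, norm_of_nonneg (pow_nonneg hsin e)]
  gcongr
  calc ‖laplaceBase s φ‖ ^ n ≤ exp (-((1 - s ^ 2) / 2 * sin φ ^ 2)) ^ n := by
        gcongr; exact norm_laplaceBase_le_exp hs1 φ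
    _ = exp (-(n * ((1 - s ^ 2) / 2) * sin φ ^ 2)) := by rw [← exp_nat_mul]; ring_nf
    _ ≤ _ := by gcongr

theorem norm_laplaceIntegral_le_rpow (e : ℕ) {r s : ℝ} (hr : r < 1) (hs : |s| ≤ r) {n : ℕ}
    (hn : 1 ≤ n) :
    ‖laplaceIntegral e s n‖ ≤ (2 * (1 - r ^ 2) / π ^ 2) ^ (-((e : ℝ) + 1) / 2)
      * Gamma (((e : ℝ) + 1) / 2) * (n : ℝ) ^ (-((e : ℝ) + 1) / 2) := by
  have hr2 : 0 < 1 - r ^ 2 := by nlinarith [abs_nonneg s]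
  have hn0 : (0 : ℝ) < n := by exact_mod_cast hn
  calc ‖laplaceIntegral e s n‖
      ≤ ∫ φ in (0 : ℝ)..π, exp (-(n * ((1 - r ^ 2) / 2) * sin φ ^ 2)) * sin φ ^ e :=
        norm_laplaceIntegral_le e hr hs n
    _ ≤ (4 * (n * ((1 - r ^ 2) / 2)) / π ^ 2) ^ (-((e : ℝ) + 1) / 2)
          * Gamma (((e : ℝ) + 1) / 2) :=
        integral_exp_neg_mul_sin_sq_mul_sin_pow_le e (by positivity)
    _ = _ := by
        rw [show 4 * (n * ((1 - r ^ 2) / 2)) / π ^ 2 = 2 * (1 - r ^ 2) / π ^ 2 * n by ring,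
          mul_rpow (by positivity) hn0.le]
        ring

theorem abs_gegenbauer_mul_integral_sin_pow (e : ℕ) {s : ℝ} (hs : s ^ 2 ≤ 1) (n : ℕ) :
    |gegenbauer ((e + 1) / 2) n s| * ∫ φ in (0 : ℝ)..π, sin φ ^ e
      = gegenbauer ((e + 1) / 2) n 1 * ‖laplaceIntegral e s n‖ := by
  have h := congrArg norm (gegenbauer_mul_laplaceIntegral_zero e hs n)
  simp only [norm_mul, laplaceIntegral_zero, Complex.norm_real, Real.norm_eq_abs,
    abs_of_pos (integral_sin_pow_pos e)] at h
  rwa [abs_of_pos (gegenbauer_one_pos (by positivity) n)] at h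

theorem exists_abs_gegenbauer_le (e : ℕ) {r : ℝ} (hr0 : 0 ≤ r) (hr1 : r < 1) :
    ∃ C, 0 < C ∧ ∀ s, |s| ≤ r → ∀ n : ℕ, 1 ≤ n →
      |gegenbauer ((e + 1) / 2) n s|
        ≤ C * (n : ℝ) ^ (-((e : ℝ) + 1) / 2) * gegenbauer ((e + 1) / 2) n 1 := by
  have hr2 : 0 < 1 - r ^ 2 := by nlinarith
  have hH : 0 < ∫ φ in (0 : ℝ)..π, sin φ ^ e := integral_sin_pow_pos e
  set K := (2 * (1 - r ^ 2) / π ^ 2) ^ (-((e : ℝ) + 1) / 2) * Gamma (((e : ℝ) + 1) / 2)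
  refine ⟨K / ∫ φ in (0 : ℝ)..π, sin φ ^ e, by positivity, fun s hs n hn => ?_⟩
  have hs1 : s ^ 2 ≤ 1 := by nlinarith [abs_nonneg s, sq_abs s]
  have hg1 := gegenbauer_one_pos (α := ((e : ℝ) + 1) / 2) (by positivity) n
  calc |gegenbauer ((e + 1) / 2) n s|
      = gegenbauer ((e + 1) / 2) n 1 * ‖laplaceIntegral e s n‖
          / ∫ φ in (0 : ℝ)..π, sin φ ^ e := by
        rw [← abs_gegenbauer_mul_integral_sin_pow e hs1 n, mul_div_cancel_right₀ _ hH.ne']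
    _ ≤ gegenbauer ((e + 1) / 2) n 1 * (K * (n : ℝ) ^ (-((e : ℝ) + 1) / 2))
          / ∫ φ in (0 : ℝ)..π, sin φ ^ e := by
        gcongr
        exact norm_laplaceIntegral_le_rpow e hr1 hs hn
    _ = _ := by ring

theorem abs_real_inner_lt_one_of_ne_of_ne_neg {E : Type*} [NormedAddCommGroup E]
    [InnerProductSpace ℝ E] {p q : E} (hp : ‖p‖ = 1) (hq : ‖q‖ = 1) (hpq : p ≠ q)
    (hpq' : p ≠ -q) : |⟪p, q⟫| < 1 := by
  have h := (inner_lt_one_iff_real_of_norm_eq_one hp (by rwa [norm_neg])).mpr hpq'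
  rw [inner_neg_right] at h
  exact abs_lt.mpr ⟨by linarith, (inner_lt_one_iff_real_of_norm_eq_one hp hq).mpr hpq⟩

theorem exists_abs_real_inner_le_lt_one {E : Type*} [NormedAddCommGroup E]
    [InnerProductSpace ℝ E] (Q : Finset E) (hQ1 : ∀ q ∈ Q, ‖q‖ = 1)
    (hQ2 : ∀ p ∈ Q, ∀ q ∈ Q, p ≠ q → p ≠ -q) :
    ∃ r, 0 ≤ r ∧ r < 1 ∧ ∀ p ∈ Q, ∀ q ∈ Q, p ≠ q → |⟪p, q⟫| ≤ r := by
  have hev : ∀ᶠ r in 𝓝[<] (1 : ℝ),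
      ∀ pq ∈ Q ×ˢ Q, pq.1 ≠ pq.2 → |⟪pq.1, pq.2⟫| ≤ r := by
    refine (Filter.eventually_all_finset _).2 fun pq hpq => ?_
    rw [Finset.mem_product] at hpq
    by_cases hne : pq.1 = pq.2
    · exact Filter.Eventually.of_forall fun _ h => absurd hne h
    · have hlt := abs_real_inner_lt_one_of_ne_of_ne_neg (hQ1 _ hpq.1) (hQ1 _ hpq.2) hne
        (hQ2 _ hpq.1 _ hpq.2 hne)
      exact (eventually_nhdsWithin_of_eventually_nhds (eventually_gt_nhds hlt)).mono
        fun r hr _ => hr.le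
  obtain ⟨r, hr, hr01⟩ := (hev.and (Ioo_mem_nhdsLT zero_lt_one)).exists
  exact ⟨r, hr01.1.le, hr01.2, fun p hp q hq hpq =>
    hr (p, q) (Finset.mem_product.2 ⟨hp, hq⟩) hpq⟩

theorem gegenMatrix_comm (d : ℕ) (Q : Finset (EuclideanSpace ℝ (Fin (d + 1)))) (ℓ : ℕ)
    (p q : Q) : gegenMatrix d Q ℓ p q = gegenMatrix d Q ℓ q p := by
  simp only [gegenMatrix, real_inner_comm]

theorem gegenMatrix_apply_self {d : ℕ} (hd : 2 ≤ d) {Q : Finset (EuclideanSpace ℝ (Fin (d + 1)))}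
    (hQ1 : ∀ q ∈ Q, ‖q‖ = 1) (ℓ : ℕ) (p : Q) : gegenMatrix d Q ℓ p p = 1 := by
  have hα : (0 : ℝ) < ((d : ℝ) - 1) / 2 := by
    have : (2 : ℝ) ≤ d := by exact_mod_cast hd
    linarith
  simp only [gegenMatrix, real_inner_self_eq_norm_sq, hQ1 _ p.2, one_pow]
  exact div_self (gegenbauer_one_pos hα ℓ).ne'

theorem exists_abs_gegenMatrix_le {d : ℕ} (hd : 2 ≤ d)
    {Q : Finset (EuclideanSpace ℝ (Fin (d + 1)))} (hQ1 : ∀ q ∈ Q, ‖q‖ = 1)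
    (hQ2 : ∀ p ∈ Q, ∀ q ∈ Q, p ≠ q → p ≠ -q) :
    ∃ C, 0 < C ∧ ∀ ℓ : ℕ, 1 ≤ ℓ → ∀ p q : Q, p ≠ q →
      |gegenMatrix d Q ℓ p q| ≤ C * (ℓ : ℝ) ^ (-((d : ℝ) - 1) / 2) := by
  obtain ⟨e, rfl⟩ : ∃ e, d = e + 2 := ⟨d - 2, by omega⟩
  obtain ⟨r, hr0, hr1, hr⟩ := exists_abs_real_inner_le_lt_one Q hQ1 hQ2
  obtain ⟨C, hC, hCr⟩ := exists_abs_gegenbauer_le e hr0 hr1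
  have hα : (((e + 2 : ℕ) : ℝ) - 1) / 2 = ((e : ℝ) + 1) / 2 := by push_cast; ring
  have hβ : -(((e + 2 : ℕ) : ℝ) - 1) / 2 = -((e : ℝ) + 1) / 2 := by push_cast; ring
  refine ⟨C, hC, fun ℓ hℓ p q hpq => ?_⟩
  have hg1 := gegenbauer_one_pos (α := ((e : ℝ) + 1) / 2) (by positivity) ℓ
  simp only [gegenMatrix, hα, hβ]
  rw [abs_div, abs_of_pos hg1, div_le_iff₀ hg1]
  exact hCr _ (hr _ p.2 _ q.2 (Subtype.coe_injective.ne hpq)) ℓ hℓ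

theorem exists_sum_abs_gegenMatrix_le {d : ℕ} (hd : 2 ≤ d)
    {Q : Finset (EuclideanSpace ℝ (Fin (d + 1)))} (hQ1 : ∀ q ∈ Q, ‖q‖ = 1)
    (hQ2 : ∀ p ∈ Q, ∀ q ∈ Q, p ≠ q → p ≠ -q) :
    ∃ C, 0 < C ∧ ∀ ℓ : ℕ, 1 ≤ ℓ → ∀ p : Q,
      ∑ q ∈ Finset.univ.erase p, |gegenMatrix d Q ℓ p q| ≤ C * (ℓ : ℝ) ^ (-((d : ℝ) - 1) / 2) := by
  obtain ⟨C, hC, hCb⟩ := exists_abs_gegenMatrix_le hd hQ1 hQ2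
  -- the `+ 1` keeps the constant positive when `Q` is empty
  refine ⟨(Q.card + 1) * C, by positivity, fun ℓ hℓ p => ?_⟩
  have hcard : ((Finset.univ.erase p).card : ℝ) ≤ Q.card + 1 := by
    have : (Finset.univ.erase p).card ≤ Q.card := by simp
    exact_mod_cast this.trans (Nat.le_succ _)
  calc ∑ q ∈ Finset.univ.erase p, |gegenMatrix d Q ℓ p q|
      ≤ ∑ _q ∈ Finset.univ.erase p, C * (ℓ : ℝ) ^ (-((d : ℝ) - 1) / 2) :=
        Finset.sum_le_sum fun q hq => hCb ℓ hℓ p q (Finset.ne_of_mem_erase hq).symm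
    _ = (Finset.univ.erase p).card * (C * (ℓ : ℝ) ^ (-((d : ℝ) - 1) / 2)) := by
        rw [Finset.sum_const, nsmul_eq_mul]
    _ ≤ (Q.card + 1) * (C * (ℓ : ℝ) ^ (-((d : ℝ) - 1) / 2)) := by gcongr
    _ = _ := by ring

/-- For `d ≥ 2` and a finite set `Q` of pairwise non-antipodal distinct
unit vectors in `ℝ^{d+1}`, the matrices `A_ℓ(p,q) = C_ℓ^{(α)}(⟨p,q⟩)/C_ℓ^{(α)}(1)` with
`α = (d−1)/2` are symmetric with unit diagonal, their off-diagonal row sums are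
`O(ℓ^{−(d−1)/2})`, and for all large `ℓ` they are strictly diagonally dominant and
invertible. -/
theorem stmt_18 (d : ℕ) (hd : 2 ≤ d)
    (Q : Finset (EuclideanSpace ℝ (Fin (d + 1))))
    (hQ1 : ∀ q ∈ Q, ‖q‖ = 1)
    (hQ2 : ∀ p ∈ Q, ∀ q ∈ Q, p ≠ q → p ≠ -q) :
    (∀ ℓ : ℕ, (∀ p q : Q, gegenMatrix d Q ℓ p q = gegenMatrix d Q ℓ q p) ∧
      ∀ p : Q, gegenMatrix d Q ℓ p p = 1) ∧
    (∃ C : ℝ, 0 < C ∧ ∀ ℓ : ℕ, 1 ≤ ℓ → ∀ p : Q,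
      (∑ q ∈ Finset.univ.erase p, |gegenMatrix d Q ℓ p q|)
        ≤ C * (ℓ : ℝ) ^ (-((d : ℝ) - 1) / 2)) ∧
    (∃ N : ℕ, ∀ ℓ : ℕ, N ≤ ℓ →
      (∀ p : Q, (∑ q ∈ Finset.univ.erase p, |gegenMatrix d Q ℓ p q|)
          < |gegenMatrix d Q ℓ p p|) ∧
      IsUnit (gegenMatrix d Q ℓ)) := by
  obtain ⟨C, hC, hrow⟩ := exists_sum_abs_gegenMatrix_le hd hQ1 hQ2
  have hdiag := gegenMatrix_apply_self hd hQ1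
  refine ⟨fun ℓ => ⟨gegenMatrix_comm d Q ℓ, hdiag ℓ⟩, ⟨C, hC, hrow⟩, ?_⟩
  have hβ : 0 < ((d : ℝ) - 1) / 2 := by
    have : (2 : ℝ) ≤ d := by exact_mod_cast hd
    linarith
  have hdecay := ((tendsto_rpow_neg_atTop hβ).comp tendsto_natCast_atTop_atTop).const_mul C
  rw [mul_zero] at hdecay
  obtain ⟨N, hN⟩ := Filter.eventually_atTop.mp
    ((hdecay.eventually_lt_const zero_lt_one).and (Filter.eventually_ge_atTop 1))
  refine ⟨N, fun ℓ hℓ => ?_⟩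
  have hdom : ∀ p : Q, ∑ q ∈ Finset.univ.erase p, |gegenMatrix d Q ℓ p q|
      < |gegenMatrix d Q ℓ p p| := fun p => by
    have hsmall := (hN ℓ hℓ).1
    simp only [Function.comp_apply, ← neg_div] at hsmall
    rw [hdiag, abs_one]
    exact (hrow ℓ (hN ℓ hℓ).2 p).trans_lt hsmall
  refine ⟨hdom, ?_⟩
  rw [Matrix.isUnit_iff_isUnit_det, isUnit_iff_ne_zero]
  exact det_ne_zero_of_sum_row_lt_diag (by simpa only [Real.norm_eq_abs] using hdom)
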